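/- Let k ≥ 1. An MSC M is existentially k-bounded if and only if the relation ≤ ∪ R_k is acyclic and, for each pair of processes (p,q), there are at most k unmatched send events whose action is a send from p to q. -/

import Mathlib

/-!
Along a linearization, the sends of a channel `(p,q)` up to an event `e` outnumber its receives up
to `e` by exactly the number of messages of `(p,q)` in transit at `e`, so a linearization is
`k`-bounded iff at most `k` messages are in transit at every send.

If `r R_k s` although `s` precedes `r`, then the `k + 1` sends `s₁, …, s_k, s` are all in transit
at `s`; and all unmatched sends of a channel are in transit at the last of them. Conversely,
extend the acyclic relation `≤ ∪ R_k` to a linearization (Szpilrajn). Should `k + 1` messages of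
`(p,q)` be in transit at some `e`, they form a chain `s₁ →⁺ ⋯ →⁺ s_{k+1}` on `p`, one of them is
matched, and the first of their receives on `q` is `R_k`-before `s_{k+1}`, hence before `e`:
it cannot be in transit.
-/

namespace MSCPaper

/-- A communication action: either `send p q m` (process `p` sends message `m`
to process `q`) or `recv p q m` (process `q` receives message `m` from `p`). -/
inductive Action (P Msg : Type) : Type where
  | send (p q : P) (m : Msg) : Action P Msg
  | recv (p q : P) (m : Msg) : Action P Msg

namespace Action

variable {P Msg : Type}

/-- The process executing an action: the sender of a send, the receiver of a receive. -/
def exec : Action P Msg → P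
  | send p _ _ => p
  | recv _ q _ => q

def isSend (a : Action P Msg) : Prop := ∃ p q m, a = send p q m

def isRecv (a : Action P Msg) : Prop := ∃ p q m, a = recv p q m

/-- `a` is a send action whose destination is `q`. -/
def sendTo (a : Action P Msg) (q : P) : Prop := ∃ p m, a = send p q m

/-- `a` is a send action from `p` to `q`. -/
def isSendFromTo (a : Action P Msg) (p q : P) : Prop := ∃ m, a = send p q m

/-- `a` is a receive action of a message from `p` to `q`. -/
def isRecvFromTo (a : Action P Msg) (p q : P) : Prop := ∃ m, a = recv p q m

end Action

/-- The data of a message sequence chart: a set of events `E`, the process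
successor relation `next` (→), the message relation `msg` (◁), and the
labelling `lbl` (λ). -/
structure PreMSC (P Msg : Type) where
  E : Type
  next : E → E → Prop
  msg : E → E → Prop
  lbl : E → Action P Msg

namespace PreMSC

variable {P Msg : Type}

/-- One step of the happens-before relation: `→ ∪ ◁`. -/
def step (M : PreMSC P Msg) (a b : M.E) : Prop := M.next a b ∨ M.msg a b

/-- The happens-before relation `≤ := (→ ∪ ◁)*`. -/
def hb (M : PreMSC P Msg) : M.E → M.E → Prop := Relation.ReflTransGen M.step

/-- The strict happens-before relation `< := (→ ∪ ◁)⁺`. -/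
def shb (M : PreMSC P Msg) : M.E → M.E → Prop := Relation.TransGen M.step

/-- An event is matched if it has a `◁`-successor. -/
def Matched (M : PreMSC P Msg) (e : M.E) : Prop := ∃ f, M.msg e f

/-- The axioms making a `PreMSC` an MSC. -/
structure IsMSC (M : PreMSC P Msg) : Prop where
  /-- The set of events is finite. -/
  finite : Finite M.E
  /-- `next` only relates events executed by the same process. -/
  next_exec : ∀ e f, M.next e f → (M.lbl e).exec = (M.lbl f).exec
  /-- Events executed by the same process are totally ordered by `next⁺`. -/
  proc_total : ∀ e f, (M.lbl e).exec = (M.lbl f).exec → e ≠ f →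
    Relation.TransGen M.next e f ∨ Relation.TransGen M.next f e
  /-- `next` is the immediate successor relation of the total order `next⁺`
  on each process line. -/
  next_cover : ∀ e f, M.next e f →
    ¬ ∃ g, Relation.TransGen M.next e g ∧ Relation.TransGen M.next g f
  /-- `◁` relates matching send/receive events. -/
  msg_lbl : ∀ e f, M.msg e f → ∃ p q m, M.lbl e = .send p q m ∧ M.lbl f = .recv p q m
  /-- Every receive event has exactly one `◁`-predecessor. -/
  recv_matched : ∀ f, (M.lbl f).isRecv → ∃! e, M.msg e f
  /-- Every event has at most one `◁`-successor. -/
  msg_functional : ∀ e f f', M.msg e f → M.msg e f' → f = f'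
  /-- The happens-before relation `(→ ∪ ◁)*` is a partial order, i.e. the
  relation `→ ∪ ◁` is acyclic. -/
  hb_po : ∀ e, ¬ Relation.TransGen M.step e e

/-- `lin` is a linearization of `M`: a reflexive total order containing
happens-before. -/
structure IsLin (M : PreMSC P Msg) (lin : M.E → M.E → Prop) : Prop where
  refl : ∀ e, lin e e
  trans : ∀ e f g, lin e f → lin f g → lin e g
  antisymm : ∀ e f, lin e f → lin f e → e = f
  total : ∀ e f, lin e f ∨ lin f e
  hb_le : ∀ e f, M.hb e f → lin e f

/-- `lin` satisfies the mailbox (n-1) condition: any two sends to the same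
destination in `lin`-order are either both matched with receives in the same
order, or the later one is unmatched. -/
def MailboxCond (M : PreMSC P Msg) (lin : M.E → M.E → Prop) : Prop :=
  ∀ s s' q, (M.lbl s).sendTo q → (M.lbl s').sendTo q → lin s s' →
    (∃ r r', M.msg s r ∧ M.msg s' r' ∧ lin r r') ∨ ¬ M.Matched s'

/-- `lin` satisfies the 1-n condition: any two sends executed by the same
process, in process order, are either both matched with receives in the same
`lin`-order, or the later one is unmatched. -/
def OneNCond (M : PreMSC P Msg) (lin : M.E → M.E → Prop) : Prop :=
  ∀ s s', (M.lbl s).isSend → (M.lbl s').isSend →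
    (M.lbl s).exec = (M.lbl s').exec → Relation.TransGen M.next s s' →
    (∃ r r', M.msg s r ∧ M.msg s' r' ∧ lin r r') ∨ ¬ M.Matched s'

/-- `lin` satisfies the n-n condition: any two sends in `lin`-order are either
both matched with receives in the same `lin`-order, or the later one is
unmatched. -/
def NNCond (M : PreMSC P Msg) (lin : M.E → M.E → Prop) : Prop :=
  ∀ s s', (M.lbl s).isSend → (M.lbl s').isSend → lin s s' →
    (∃ r r', M.msg s r ∧ M.msg s' r' ∧ lin r r') ∨ ¬ M.Matched s'

/-- An n-1 (mailbox) MSC: one having a mailbox linearization. -/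
def IsMailbox (M : PreMSC P Msg) : Prop := ∃ lin, M.IsLin lin ∧ M.MailboxCond lin

/-- A 1-n MSC: one having a 1-n linearization. -/
def IsOneN (M : PreMSC P Msg) : Prop := ∃ lin, M.IsLin lin ∧ M.OneNCond lin

/-- An n-n MSC: one having an n-n linearization. -/
def IsNN (M : PreMSC P Msg) : Prop := ∃ lin, M.IsLin lin ∧ M.NNCond lin

/-- A peer-to-peer (1-1) MSC. -/
def IsPP (M : PreMSC P Msg) : Prop :=
  ∀ s s' p q, (M.lbl s).isSendFromTo p q → (M.lbl s').isSendFromTo p q →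
    Relation.TransGen M.next s s' →
    (∃ r r', M.msg s r ∧ M.msg s' r' ∧ Relation.TransGen M.next r r') ∨ ¬ M.Matched s'

/-- A causally ordered MSC. -/
def IsCO (M : PreMSC P Msg) : Prop :=
  ∀ s s' q, (M.lbl s).sendTo q → (M.lbl s').sendTo q → M.hb s s' →
    (∃ r r', M.msg s r ∧ M.msg s' r' ∧ Relation.ReflTransGen M.next r r') ∨ ¬ M.Matched s'

/-- An RSC MSC: no unmatched send events and some linearization in which every
send is immediately followed by its matching receive. -/
def IsRSC (M : PreMSC P Msg) : Prop :=
  (∀ e, (M.lbl e).isSend → M.Matched e) ∧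
  ∃ lin, M.IsLin lin ∧
    ∀ s r, M.msg s r → lin s r ∧ ∀ e, lin s e → lin e r → e = s ∨ e = r

/-- The relation `↦_mb`. -/
def mbRel (M : PreMSC P Msg) (s s' : M.E) : Prop :=
  (∃ q, (M.lbl s).sendTo q ∧ (M.lbl s').sendTo q) ∧
  ((M.Matched s ∧ ¬ M.Matched s') ∨
    ∃ r₁ r₂, M.msg s r₁ ∧ M.msg s' r₂ ∧ Relation.TransGen M.next r₁ r₂)

/-- The relation `↦_1n`. -/
def onenRel (M : PreMSC P Msg) (e₁ e₂ : M.E) : Prop :=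
  ((M.lbl e₁).isSend ∧ (M.lbl e₂).isSend ∧ (M.lbl e₁).exec = (M.lbl e₂).exec ∧
    M.Matched e₁ ∧ ¬ M.Matched e₂) ∨
  (∃ s₁ s₂, M.msg s₁ e₁ ∧ M.msg s₂ e₂ ∧ (M.lbl s₁).exec = (M.lbl s₂).exec ∧
    Relation.TransGen M.next s₁ s₂)

/-- One step of `≺_mb`: the relation `→ ∪ ◁ ∪ ↦_mb`. -/
def mbStep (M : PreMSC P Msg) (a b : M.E) : Prop := M.next a b ∨ M.msg a b ∨ M.mbRel a b

/-- One step of `⪯_1n`: the relation `→ ∪ ◁ ∪ ↦_1n`. -/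
def onenStep (M : PreMSC P Msg) (a b : M.E) : Prop := M.next a b ∨ M.msg a b ∨ M.onenRel a b

/-- One step of `◅`: the relation `→ ∪ ◁ ∪ ↦_mb ∪ ↦_1n`. -/
def nnStep (M : PreMSC P Msg) (a b : M.E) : Prop :=
  M.next a b ∨ M.msg a b ∨ M.mbRel a b ∨ M.onenRel a b

/-- The relation `◅ := (→ ∪ ◁ ∪ ↦_mb ∪ ↦_1n)⁺`. -/
def nnRel (M : PreMSC P Msg) : M.E → M.E → Prop := Relation.TransGen M.nnStep

/-- The relation `⋈`. -/
def nnBowtie (M : PreMSC P Msg) (e₁ e₂ : M.E) : Prop :=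
  M.nnRel e₁ e₂ ∨
  ((∃ s₁ s₂, M.msg s₁ e₁ ∧ M.msg s₂ e₂ ∧ M.nnRel s₁ s₂) ∧ ¬ M.nnRel e₁ e₂) ∨
  ((∃ r₁ r₂, M.msg e₁ r₁ ∧ M.msg e₂ r₂ ∧ M.nnRel r₁ r₂) ∧ ¬ M.nnRel e₁ e₂) ∨
  ((M.lbl e₁).isSend ∧ M.Matched e₁ ∧ (M.lbl e₂).isSend ∧ ¬ M.Matched e₂ ∧
    ¬ M.nnRel e₁ e₂)

/-- `lin` is `k`-bounded: for every send event `e` from `p` to `q`, the number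
of sends from `p` to `q` up to `e` minus the number of receives of messages
from `p` to `q` up to `e` is at most `k`. -/
def KBounded (M : PreMSC P Msg) (k : ℕ) (lin : M.E → M.E → Prop) : Prop :=
  ∀ e p q m, M.lbl e = .send p q m →
    Set.ncard {f | lin f e ∧ (M.lbl f).isSendFromTo p q} ≤
      Set.ncard {f | lin f e ∧ (M.lbl f).isRecvFromTo p q} + k

/-- The relation `R_k` (`⇝_k` of Lohrey–Muscholl, asynchronous version):
`r R_k s` iff there is a chain `s₁ →⁺ … →⁺ s_k →⁺ s` of sends from `p` to `q`,
at least one of them matched, `r` is a receive matching one of them, and `r`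
is `→*`-before every receive matching one of them. -/
def RkRel (M : PreMSC P Msg) (k : ℕ) (r s : M.E) : Prop :=
  ∃ (p q : P) (σ : Fin (k + 1) → M.E),
    σ (Fin.last k) = s ∧
    (∀ i : Fin k, Relation.TransGen M.next (σ i.castSucc) (σ i.succ)) ∧
    (∀ i, (M.lbl (σ i)).isSendFromTo p q) ∧
    (∃ i, M.Matched (σ i)) ∧
    (∃ i, M.msg (σ i) r) ∧
    (∀ i f, M.msg (σ i) f → Relation.ReflTransGen M.next r f)

/-- `e` is the `n`-th (1-indexed) send event of channel `(p,q)`. -/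
def nthSend (M : PreMSC P Msg) (p q : P) (n : ℕ) (e : M.E) : Prop :=
  (M.lbl e).isSendFromTo p q ∧
  Set.ncard {f | (M.lbl f).isSendFromTo p q ∧ Relation.ReflTransGen M.next f e} = n

/-- `e` is the `n`-th (1-indexed) receive event of channel `(p,q)`. -/
def nthRecv (M : PreMSC P Msg) (p q : P) (n : ℕ) (e : M.E) : Prop :=
  (M.lbl e).isRecvFromTo p q ∧
  Set.ncard {f | (M.lbl f).isRecvFromTo p q ∧ Relation.ReflTransGen M.next f e} = n

/-- The relation `≺_B` for bound `k`: `r ≺_B s` iff for some `i ≥ 1` and some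
channel `(p,q)`, `r` is the `i`-th receive and `s` the `(i+k)`-th send of `(p,q)`. -/
def BRel (M : PreMSC P Msg) (k : ℕ) (r s : M.E) : Prop :=
  ∃ (p q : P) (i : ℕ), 1 ≤ i ∧ M.nthRecv p q i r ∧ M.nthSend p q (i + k) s

/-- For every channel `(p,q)` there are at most `k` unmatched sends from `p` to `q`. -/
def UnmatchedBounded (M : PreMSC P Msg) (k : ℕ) : Prop :=
  ∀ p q : P, Set.ncard {e | (M.lbl e).isSendFromTo p q ∧ ¬ M.Matched e} ≤ k

/-- The restriction of an MSC to a subset of its events. -/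
def restrict (M : PreMSC P Msg) (S : Set M.E) : PreMSC P Msg where
  E := S
  next := fun a b => M.next a.val b.val
  msg := fun a b => M.msg a.val b.val
  lbl := fun a => M.lbl a.val

/-- `S` is downward-closed for happens-before. -/
def DownClosed (M : PreMSC P Msg) (S : Set M.E) : Prop :=
  ∀ e f, M.hb e f → f ∈ S → e ∈ S

/-- `S` is downward-closed for `⪯_1n := (→ ∪ ◁ ∪ ↦_1n)*`. -/
def OneNDownClosed (M : PreMSC P Msg) (S : Set M.E) : Prop :=
  ∀ e f, Relation.ReflTransGen M.onenStep e f → f ∈ S → e ∈ S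

/-- The MSC contains a crown: a cyclic sequence of matched message pairs
`(s_i, r_i)`, of length at least 2, with `s_i < r_{i+1}` (indices mod `k`). -/
def HasCrown (M : PreMSC P Msg) : Prop :=
  ∃ (k : ℕ) (hk : 2 ≤ k) (s r : Fin k → M.E),
    (∀ i, M.msg (s i) (r i)) ∧
    ∀ i : Fin k, M.shb (s i) (r ⟨(i.val + 1) % k, Nat.mod_lt _ (by omega)⟩)

end PreMSC

end MSCPaper

namespace MSCPaper

open Relation

section Chains

variable {α : Type*} {r : α → α → Prop}

theorem transGen_of_forall_transGen_succ {n : ℕ} {σ : Fin (n + 1) → α}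
    (h : ∀ i : Fin n, TransGen r (σ i.castSucc) (σ i.succ)) {i j : Fin (n + 1)} (hij : i < j) :
    TransGen r (σ i) (σ j) := by
  induction j using Fin.induction with
  | zero => exact absurd hij (Fin.not_lt_zero _)
  | succ j ih =>
    rcases (Fin.le_castSucc_iff.mpr hij).eq_or_lt with rfl | hlt
    · exact h j
    · exact (ih hlt).trans (h j)

theorem injective_of_forall_lt_rel [IsStrictOrder α r] {n : ℕ} {σ : Fin n → α}
    (h : ∀ i j, i < j → r (σ i) (σ j)) : Function.Injective σ := by
  intro i j hij
  by_contra hne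
  rcases lt_or_gt_of_ne hne with hlt | hlt
  · exact irrefl (σ j) (hij ▸ h i j hlt)
  · exact irrefl (σ j) (hij ▸ h j i hlt)

theorem exists_least_of_pairwise_total [Finite α] [IsStrictOrder α r] {S : Set α}
    (hS : S.Nonempty) (htot : S.Pairwise fun a b => r a b ∨ r b a) :
    ∃ m ∈ S, ∀ x ∈ S, x ≠ m → r m x := by
  obtain ⟨m, hm, hmin⟩ := (Finite.wellFounded_of_trans_of_irrefl r).has_min S hS
  exact ⟨m, hm, fun x hx hxm => (htot hx hm hxm).resolve_left (hmin x hx)⟩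

theorem exists_chain_of_le_ncard [Finite α] [IsStrictOrder α r] {S : Set α}
    (htot : S.Pairwise fun a b => r a b ∨ r b a) {n : ℕ} (hn : n ≤ S.ncard) :
    ∃ σ : Fin n → α, (∀ i, σ i ∈ S) ∧ ∀ i j, i < j → r (σ i) (σ j) := by
  induction n generalizing S with
  | zero => exact ⟨Fin.elim0, fun i => i.elim0, fun i => i.elim0⟩
  | succ n ih =>
    obtain ⟨m, hm, hleast⟩ := exists_least_of_pairwise_total
      (Set.nonempty_of_ncard_ne_zero (by omega)) htot
    obtain ⟨τ, hτS, hτ⟩ := ih (htot.mono Set.sdiff_subset)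
      (by rw [Set.ncard_sdiff_singleton_of_mem hm]; omega)
    refine ⟨Fin.cons m τ, Fin.cases hm fun i => (hτS i).1, ?_⟩
    intro i j hij
    induction j using Fin.cases with
    | zero => exact absurd hij (Fin.not_lt_zero i)
    | succ j =>
      induction i using Fin.cases with
      | zero => exact hleast _ (hτS j).1 (hτS j).2
      | succ i => exact hτ i j (Fin.succ_lt_succ_iff.mp hij)

theorem le_ncard_of_injective [Finite α] {S : Set α} {n : ℕ} {σ : Fin n → α}
    (hσ : Function.Injective σ) (hσS : ∀ i, σ i ∈ S) : n ≤ S.ncard := by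
  calc n = (Set.range σ).ncard := by rw [Set.ncard_range_of_injective hσ, Nat.card_fin]
    _ ≤ S.ncard := Set.ncard_le_ncard (Set.range_subset_iff.mpr hσS)

end Chains

namespace Action

variable {P Msg : Type} {a : Action P Msg} {p q : P}

theorem exec_of_isSendFromTo (h : a.isSendFromTo p q) : a.exec = p := by
  obtain ⟨m, rfl⟩ := h
  rfl

theorem exec_of_isRecvFromTo (h : a.isRecvFromTo p q) : a.exec = q := by
  obtain ⟨m, rfl⟩ := h
  rfl

end Action

namespace PreMSC

variable {P Msg : Type} {M : PreMSC P Msg} {lin : M.E → M.E → Prop} {k : ℕ}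

theorem hb_of_reflTransGen_next {a b : M.E} (h : ReflTransGen M.next a b) : M.hb a b :=
  ReflTransGen.mono (fun _ _ => Or.inl) _ _ h

theorem hb_of_transGen_next {a b : M.E} (h : TransGen M.next a b) : M.hb a b :=
  hb_of_reflTransGen_next h.to_reflTransGen

theorem hb_of_msg {a b : M.E} (h : M.msg a b) : M.hb a b :=
  ReflTransGen.single (Or.inr h)

namespace IsMSC

theorem isStrictOrder_transGen_next (hM : M.IsMSC) : IsStrictOrder M.E (TransGen M.next) where
  irrefl a h := hM.hb_po a (TransGen.mono (fun _ _ => Or.inl) _ _ h)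

theorem msg_left_unique (hM : M.IsMSC) {a b f : M.E} (ha : M.msg a f) (hb : M.msg b f) : a = b := by
  obtain ⟨p, q, m, -, hf⟩ := hM.msg_lbl a f ha
  exact (hM.recv_matched f ⟨p, q, m, hf⟩).unique ha hb

theorem isRecvFromTo_iff_of_msg (hM : M.IsMSC) {a f : M.E} (h : M.msg a f) {p q : P} :
    (M.lbl f).isRecvFromTo p q ↔ (M.lbl a).isSendFromTo p q := by
  obtain ⟨p', q', m, ha, hf⟩ := hM.msg_lbl a f h
  simp [Action.isRecvFromTo, Action.isSendFromTo, ha, hf]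

end IsMSC

namespace IsLin

theorem not_transGen_self (hlin : M.IsLin lin) {R : M.E → M.E → Prop}
    (hR : ∀ a b, R a b → lin a b ∧ a ≠ b) (e : M.E) : ¬ TransGen R e e := by
  suffices ∀ a b, TransGen R a b → lin a b ∧ a ≠ b from fun h => (this e e h).2 rfl
  intro a b h
  induction h with
  | single h => exact hR _ _ h
  | @tail b c _ hbc ih =>
    obtain ⟨hbc, hne⟩ := hR b c hbc
    refine ⟨hlin.trans _ _ _ ih.1 hbc, ?_⟩
    rintro rfl
    exact hne (hlin.antisymm _ _ hbc ih.1)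

end IsLin

theorem exists_isLin_of_acyclic {R : M.E → M.E → Prop} (hR : ∀ e, ¬ TransGen R e e)
    (hstep : ∀ a b, M.step a b → R a b) : ∃ lin, M.IsLin lin ∧ ∀ a b, R a b → lin a b := by
  have : IsPartialOrder M.E (ReflTransGen R) :=
    { refl := fun _ => ReflTransGen.refl
      trans := fun _ _ _ => ReflTransGen.trans
      antisymm := fun a b hab hba => by
        rcases reflTransGen_iff_eq_or_transGen.mp hab with rfl | hab
        · rfl
        rcases reflTransGen_iff_eq_or_transGen.mp hba with rfl | hba
        · rfl
        exact absurd (hab.trans hba) (hR a) }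
  obtain ⟨lin, hlin, hle⟩ := extend_partialOrder (ReflTransGen R)
  refine ⟨lin, ⟨refl_of lin, fun _ _ _ => trans_of lin, fun _ _ => antisymm_of lin,
    total_of lin, fun a b h => hle _ _ (ReflTransGen.mono hstep _ _ h)⟩,
    fun a b h => hle _ _ (ReflTransGen.single h)⟩

def inTransit (M : PreMSC P Msg) (lin : M.E → M.E → Prop) (e : M.E) (p q : P) : Set M.E :=
  {a | lin a e ∧ (M.lbl a).isSendFromTo p q ∧ ¬ ∃ f, M.msg a f ∧ lin f e}

theorem ncard_sends_eq_ncard_recvs_add_ncard_inTransit (hM : M.IsMSC) (hlin : M.IsLin lin) (e : M.E) (p q : P) :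
    {f | lin f e ∧ (M.lbl f).isSendFromTo p q}.ncard =
      {f | lin f e ∧ (M.lbl f).isRecvFromTo p q}.ncard + (M.inTransit lin e p q).ncard := by
  have := hM.finite
  rw [← Set.ncard_inter_add_ncard_sdiff_eq_ncard _ {a | ∃ f, M.msg a f ∧ lin f e}]
  congr 1
  · refine Set.ncard_congr (fun a ha => ha.2.choose) (fun a ha => ?_) (fun a b ha hb hab => ?_)
      (fun f ⟨hfe, hf⟩ => ?_)
    · obtain ⟨hmsg, hfe⟩ := ha.2.choose_spec
      exact ⟨hfe, (hM.isRecvFromTo_iff_of_msg hmsg).mpr ha.1.2⟩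
    · exact hM.msg_left_unique ha.2.choose_spec.1 (hab ▸ hb.2.choose_spec.1)
    · obtain ⟨m, hm⟩ := hf
      obtain ⟨a, ha, -⟩ := hM.recv_matched f ⟨p, q, m, hm⟩
      have hae : lin a e := hlin.trans _ _ _ (hlin.hb_le _ _ (hb_of_msg ha)) hfe
      refine ⟨a, ⟨⟨hae, (hM.isRecvFromTo_iff_of_msg ha).mp ⟨m, hm⟩⟩, f, ha, hfe⟩, ?_⟩
      exact hM.msg_functional _ _ _ (Exists.choose_spec (p := fun f => M.msg a f ∧ lin f e) _).1 ha
  · exact congrArg Set.ncard (Set.ext fun _ => and_assoc)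

theorem kBounded_iff_ncard_inTransit_le (hM : M.IsMSC) (hlin : M.IsLin lin) :
    M.KBounded k lin ↔
      ∀ e p q, (M.lbl e).isSendFromTo p q → (M.inTransit lin e p q).ncard ≤ k := by
  refine forall₃_congr fun e p q => ?_
  rw [ncard_sends_eq_ncard_recvs_add_ncard_inTransit hM hlin, Nat.add_le_add_iff_left]
  exact ⟨fun h ⟨m, hm⟩ => h m hm, fun h m hm => h ⟨m, hm⟩⟩

theorem unmatchedBounded_of_ncard_inTransit_le (hM : M.IsMSC) (hlin : M.IsLin lin)
    (hkb : ∀ e p q, (M.lbl e).isSendFromTo p q → (M.inTransit lin e p q).ncard ≤ k) :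
    M.UnmatchedBounded k := by
  have := hM.finite
  have := hM.isStrictOrder_transGen_next
  intro p q
  rcases Set.eq_empty_or_nonempty {e | (M.lbl e).isSendFromTo p q ∧ ¬ M.Matched e} with hU | hU
  · simp [hU]
  obtain ⟨m, hm, hlast⟩ := exists_least_of_pairwise_total (r := Function.swap (TransGen M.next))
    hU fun a ha b hb hab => (hM.proc_total a b (by
      rw [Action.exec_of_isSendFromTo ha.1, Action.exec_of_isSendFromTo hb.1]) hab).symm
  refine (Set.ncard_le_ncard (t := M.inTransit lin m p q)
    fun x hx => ⟨?_, hx.1, fun ⟨f, hf, _⟩ => hx.2 ⟨f, hf⟩⟩).trans (hkb m p q hm.1)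
  rcases eq_or_ne x m with rfl | hxm
  · exact hlin.refl x
  · exact hlin.hb_le _ _ (hb_of_transGen_next (hlast x hx hxm))

theorem le_ncard_inTransit_of_rkRel (hM : M.IsMSC) (hlin : M.IsLin lin) {r s : M.E}
    (hrs : M.RkRel k r s) (hsr : ¬ lin r s) :
    ∃ p q, (M.lbl s).isSendFromTo p q ∧ k + 1 ≤ (M.inTransit lin s p q).ncard := by
  have := hM.finite
  have := hM.isStrictOrder_transGen_next
  obtain ⟨p, q, σ, rfl, hchain, hsend, -, -, hfirst⟩ := hrs
  have hlt : ∀ i j, i < j → TransGen M.next (σ i) (σ j) :=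
    fun _ _ => transGen_of_forall_transGen_succ hchain
  refine ⟨p, q, hsend _, le_ncard_of_injective (injective_of_forall_lt_rel hlt)
    fun i => ⟨?_, hsend i, ?_⟩⟩
  · rcases (Fin.le_last i).eq_or_lt with rfl | hi
    · exact hlin.refl _
    · exact hlin.hb_le _ _ (hb_of_transGen_next (hlt _ _ hi))
  · rintro ⟨f, hf, hfs⟩
    exact hsr (hlin.trans _ _ _ (hlin.hb_le _ _ (hb_of_reflTransGen_next (hfirst i f hf))) hfs)

theorem IsLin.lt_of_rkRel (hM : M.IsMSC) (hlin : M.IsLin lin)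
    (hkb : ∀ e p q, (M.lbl e).isSendFromTo p q → (M.inTransit lin e p q).ncard ≤ k)
    {r s : M.E} (hrs : M.RkRel k r s) : lin r s ∧ r ≠ s := by
  refine ⟨by_contra fun hsr => ?_, ?_⟩
  · obtain ⟨p, q, hs, hle⟩ := le_ncard_inTransit_of_rkRel hM hlin hrs hsr
    exact absurd (hkb s p q hs) (by omega)
  · rintro rfl
    obtain ⟨p, q, σ, rfl, -, hsend, -, ⟨i, hi⟩, -⟩ := hrs
    obtain ⟨_, _, _, -, hr⟩ := hM.msg_lbl _ _ hi
    obtain ⟨m, hm⟩ := hsend (Fin.last k)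
    rw [hm] at hr
    cases hr

theorem exists_matched_of_injective (hM : M.IsMSC) (hub : M.UnmatchedBounded k) {p q : P}
    {σ : Fin (k + 1) → M.E} (hσ : Function.Injective σ)
    (hsend : ∀ i, (M.lbl (σ i)).isSendFromTo p q) : ∃ i, M.Matched (σ i) := by
  have := hM.finite
  by_contra! h
  have := le_ncard_of_injective (S := {e | (M.lbl e).isSendFromTo p q ∧ ¬ M.Matched e}) hσ
    fun i => ⟨hsend i, h i⟩
  exact absurd (hub p q) (by omega)

theorem exists_rkRel_of_lt_ncard_inTransit (hM : M.IsMSC) (hub : M.UnmatchedBounded k)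
    {e : M.E} {p q : P} (h : k < (M.inTransit lin e p q).ncard) :
    ∃ r s, M.RkRel k r s ∧ lin s e ∧ ¬ lin r e := by
  have := hM.finite
  have := hM.isStrictOrder_transGen_next
  obtain ⟨σ, hσT, hσ⟩ := exists_chain_of_le_ncard (r := TransGen M.next)
    (fun a ha b hb hab => hM.proc_total a b (by
      rw [Action.exec_of_isSendFromTo ha.2.1, Action.exec_of_isSendFromTo hb.2.1]) hab) h
  have hsend i : (M.lbl (σ i)).isSendFromTo p q := (hσT i).2.1
  obtain ⟨i₀, f₀, hf₀⟩ :=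
    exists_matched_of_injective hM hub (injective_of_forall_lt_rel hσ) hsend
  obtain ⟨r, ⟨i, hi⟩, hfirst⟩ := exists_least_of_pairwise_total (r := TransGen M.next)
    (S := {f | ∃ i, M.msg (σ i) f}) ⟨f₀, i₀, hf₀⟩ (by
      rintro a ⟨i, hi⟩ b ⟨j, hj⟩ hab
      refine hM.proc_total a b ?_ hab
      rw [Action.exec_of_isRecvFromTo ((hM.isRecvFromTo_iff_of_msg hi).mpr (hsend i)),
        Action.exec_of_isRecvFromTo ((hM.isRecvFromTo_iff_of_msg hj).mpr (hsend j))])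
  refine ⟨r, σ (Fin.last k), ⟨p, q, σ, rfl, fun j => hσ _ _ Fin.castSucc_lt_succ, hsend,
    ⟨i₀, f₀, hf₀⟩, ⟨i, hi⟩, fun j f hf => ?_⟩, (hσT _).1, fun hre => (hσT i).2.2 ⟨r, hi, hre⟩⟩
  rcases eq_or_ne f r with rfl | hfr
  · exact ReflTransGen.refl
  · exact (hfirst f ⟨j, hf⟩ hfr).to_reflTransGen

end PreMSC

open PreMSC in
theorem existentiallyKBounded_iff_general {P Msg : Type} (M : PreMSC P Msg) (hM : M.IsMSC)
    (k : ℕ) :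
    (∃ lin, M.IsLin lin ∧ M.KBounded k lin) ↔
      ((∀ e, ¬ Relation.TransGen (fun a b => M.shb a b ∨ M.RkRel k a b) e e) ∧
        M.UnmatchedBounded k) := by
  constructor
  · rintro ⟨lin, hlin, hkb⟩
    rw [kBounded_iff_ncard_inTransit_le hM hlin] at hkb
    refine ⟨hlin.not_transGen_self ?_, unmatchedBounded_of_ncard_inTransit_le hM hlin hkb⟩
    rintro a b (hab | hab)
    · exact ⟨hlin.hb_le _ _ hab.to_reflTransGen, by rintro rfl; exact hM.hb_po a hab⟩
    · exact hlin.lt_of_rkRel hM hkb hab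
  · rintro ⟨hacyclic, hub⟩
    obtain ⟨lin, hlin, hle⟩ :=
      exists_isLin_of_acyclic hacyclic fun a b h => Or.inl (TransGen.single h)
    refine ⟨lin, hlin, (kBounded_iff_ncard_inTransit_le hM hlin).mpr fun e p q _ => ?_⟩
    by_contra! h
    obtain ⟨r, s, hrs, hse, hre⟩ := exists_rkRel_of_lt_ncard_inTransit hM hub h
    exact hre (hlin.trans _ _ _ (hle _ _ (Or.inr hrs)) hse)

/-- For `k ≥ 1`, an MSC is existentially `k`-bounded iff
`≤ ∪ R_k` is acyclic and each channel `(p,q)` has at most `k` unmatched sends. -/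
theorem existentiallyKBounded_iff {P Msg : Type} (M : PreMSC P Msg) (hM : M.IsMSC)
    (k : ℕ) (hk : 1 ≤ k) :
    (∃ lin, M.IsLin lin ∧ M.KBounded k lin) ↔
      ((∀ e, ¬ Relation.TransGen (fun a b => M.shb a b ∨ M.RkRel k a b) e e) ∧
        M.UnmatchedBounded k) :=
  existentiallyKBounded_iff_general M hM k

end MSCPaper
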